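/- For all natural numbers i, j, z with 0 ≤ i ≤ j ≤ z, the syllogistic rule with antecedents ∃_{≤i}(q, ō) and ∃_{>j}(p, q) and consequent ∃_{>(j−i)}(p, o) is sound: in any structure, if |q^𝔄 ∩ (A\o^𝔄)| ≤ i and |p^𝔄 ∩ q^𝔄| > j, then |p^𝔄 ∩ o^𝔄| > j − i. -/

import Mathlib

/-- Literals over a set of atoms `P`: an atom or a negated atom. -/
inductive Lit (P : Type) : Type
  | pos (p : P)
  | neg (p : P)
deriving DecidableEq

/-- Formulas of the (extended) numerical syllogistic: `∃_{≤ i}(ℓ,m)` and `∃_{> i}(ℓ,m)`. -/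
inductive Fm (P : Type) : Type
  | le (i : ℕ) (l m : Lit P)
  | gt (i : ℕ) (l m : Lit P)
deriving DecidableEq

/-- Interpretation of a literal in a structure with domain `A` given by `I`. -/
def Lit.interp {P A : Type} (I : P → Set A) : Lit P → Set A
  | .pos p => I p
  | .neg p => (I p)ᶜ

/-- Truth of a formula in a structure: cardinality constraints on `ℓ^𝔄 ∩ m^𝔄`. -/
def Fm.sat {P A : Type} (I : P → Set A) : Fm P → Prop
  | .le i l m => Cardinal.mk ↥(l.interp I ∩ m.interp I) ≤ (i : Cardinal)
  | .gt i l m => (i : Cardinal) < Cardinal.mk ↥(l.interp I ∩ m.interp I)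

/-- Semantic entailment: every structure (nonempty domain) satisfying `Θ` satisfies `ψ`. -/
def Entails {P : Type} (Θ : Set (Fm P)) (ψ : Fm P) : Prop :=
  ∀ (A : Type) (_ : Nonempty A) (I : P → Set A), (∀ φ ∈ Θ, φ.sat I) → ψ.sat I

/-- The negation map, swapping `∃_{≤ i}` and `∃_{> i}`. -/
def Fm.negate {P : Type} : Fm P → Fm P
  | .le i l m => .gt i l m
  | .gt i l m => .le i l m

/-- Swap the (unordered) arguments of a formula. -/
def Fm.swap {P : Type} : Fm P → Fm P
  | .le i l m => .le i m l
  | .gt i l m => .gt i m l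

/-- The numerical index of a formula. -/
def Fm.idx {P : Type} : Fm P → ℕ
  | .le i _ _ => i
  | .gt i _ _ => i

/-- The atom of a literal. -/
def Lit.atom {P : Type} : Lit P → P
  | .pos p => p
  | .neg p => p

/-- The two (unordered) literal arguments of a formula. -/
def Fm.args {P : Type} : Fm P → Lit P × Lit P
  | .le _ l m => (l, m)
  | .gt _ l m => (l, m)

/-- All atoms of a formula lie in `S`. -/
def Fm.atomsIn {P : Type} (S : Set P) (φ : Fm P) : Prop :=
  φ.args.1.atom ∈ S ∧ φ.args.2.atom ∈ S

/-- Applying a substitution to a literal. -/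
def Lit.map {P : Type} (g : P → P) : Lit P → Lit P
  | .pos p => .pos (g p)
  | .neg p => .neg (g p)

/-- Applying a substitution to a formula. -/
def Fm.map {P : Type} (g : P → P) : Fm P → Fm P
  | .le i l m => .le i (l.map g) (m.map g)
  | .gt i l m => .gt i (l.map g) (m.map g)

/-- A syllogistic rule: a finite set of antecedents and a consequent. -/
structure Rule (P : Type) where
  ants : Finset (Fm P)
  con : Fm P

/-- The direct syllogistic derivation relation `⊢_X`. -/
inductive Derives {P : Type} (X : Set (Rule P)) : Set (Fm P) → Fm P → Prop
  | prem {Θ : Set (Fm P)} {θ : Fm P} : θ ∈ Θ → Derives X Θ θ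
  | rule {Θ : Set (Fm P)} (r : Rule P) (g : P → P) : r ∈ X →
      (∀ ψ ∈ r.ants, Derives X Θ (ψ.map g)) → Derives X Θ (r.con.map g)

/-- The indirect syllogistic derivation relation `⊩_X` (with reductio ad absurdum). -/
inductive IndDerives {P : Type} (X : Set (Rule P)) : Set (Fm P) → Fm P → Prop
  | prem {Θ : Set (Fm P)} {θ : Fm P} : θ ∈ Θ → IndDerives X Θ θ
  | rule {Θ : Set (Fm P)} (r : Rule P) (g : P → P) : r ∈ X →
      (∀ ψ ∈ r.ants, IndDerives X Θ (ψ.map g)) → IndDerives X Θ (r.con.map g)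
  | raa {Θ : Set (Fm P)} {θ : Fm P} (i : ℕ) (p : P) :
      IndDerives X (insert θ Θ) (Fm.gt i (Lit.pos p) (Lit.neg p)) →
      IndDerives X Θ θ.negate
theorem Set.inter_subset_inter_union_inter_compl {α : Type*} (p q o : Set α) :
    p ∩ q ⊆ p ∩ o ∪ q ∩ oᶜ :=
  fun x ⟨hp, hq⟩ => (em (x ∈ o)).imp (fun ho => ⟨hp, ho⟩) (fun ho => ⟨hq, ho⟩)

theorem Cardinal.mk_inter_le_mk_inter_add_mk_inter_compl {α : Type*} (p q o : Set α) :
    Cardinal.mk ↥(p ∩ q) ≤ Cardinal.mk ↥(p ∩ o) + Cardinal.mk ↥(q ∩ oᶜ) :=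
  (Cardinal.mk_le_mk_of_subset (p.inter_subset_inter_union_inter_compl q o)).trans
    (Cardinal.mk_union_le _ _)

theorem generalized_darii_sound_general (i j : ℕ) (hij : i ≤ j)
    (A : Type) (o p q : Set A)
    (h1 : Cardinal.mk ↥(q ∩ oᶜ) ≤ (i : Cardinal))
    (h2 : (j : Cardinal) < Cardinal.mk ↥(p ∩ q)) :
    ((j - i : ℕ) : Cardinal) < Cardinal.mk ↥(p ∩ o) := by
  by_contra! h
  refine h2.not_ge ?_
  calc Cardinal.mk ↥(p ∩ q) ≤ Cardinal.mk ↥(p ∩ o) + Cardinal.mk ↥(q ∩ oᶜ) :=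
        Cardinal.mk_inter_le_mk_inter_add_mk_inter_compl p q o
    _ ≤ ((j - i : ℕ) : Cardinal) + (i : Cardinal) := add_le_add h h1
    _ = (j : Cardinal) := by rw [← Nat.cast_add, Nat.sub_add_cancel hij]

/-- soundness of the generalized Darii rule: from ∃_{≤i}(q,ō) and
∃_{>j}(p,q) infer ∃_{>(j−i)}(p,o). -/
theorem generalized_darii_sound (i j z : ℕ) (hij : i ≤ j) (hjz : j ≤ z)
    (A : Type) [Nonempty A] (o p q : Set A)
    (h1 : Cardinal.mk ↥(q ∩ oᶜ) ≤ (i : Cardinal))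
    (h2 : (j : Cardinal) < Cardinal.mk ↥(p ∩ q)) :
    ((j - i : ℕ) : Cardinal) < Cardinal.mk ↥(p ∩ o) :=
  generalized_darii_sound_general i j hij A o p q h1 h2
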